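/- Let e(n,i) and f(n,i) count ballotlike paths from (0,0) to (n,i) with no down step and with at least one down step, respectively. Then for n > i ≥ 1, f(n,i) = f(n-1,i-1) + 2*f(n-1,i) + f(n-1,i+1) + e(n-1,i+1), and for n ≥ 2, f(n,0) = f(n-1,0) + f(n-1,1) + e(n-1,1). -/

import Mathlib

inductive BStep : Type
  | U | D | Hu | Hd
deriving DecidableEq

def BStep.h : BStep → ℤ
  | .U => 1
  | .D => -1
  | .Hu => 0
  | .Hd => 0

/-- The height reached by a path (list of steps). -/
def hsum (p : List BStep) : ℤ := (p.map BStep.h).sum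

/-- The path never goes below the x-axis. -/
def NonNegPath (p : List BStep) : Prop := ∀ k : ℕ, 0 ≤ hsum (p.take k)

/-- Restriction (1): no umber horizontal step occurs at height zero. -/
def Res1 (p : List BStep) : Prop :=
  ∀ (i : ℕ) (hi : i < p.length), p.get ⟨i, hi⟩ = BStep.Hu → 0 < hsum (p.take i)

/-- Restriction (2): no denim horizontal step occurs before the first down step. -/
def Res2 (p : List BStep) : Prop :=
  ∀ (i : ℕ) (hi : i < p.length), p.get ⟨i, hi⟩ = BStep.Hd →
    ∃ (j : ℕ) (hj : j < p.length), j < i ∧ p.get ⟨j, hj⟩ = BStep.D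

/-- A bicolored Motzkin path of length `n`: from (0,0) to (n,0), never below the x-axis. -/
def IsBMotzkin (n : ℕ) (p : List BStep) : Prop :=
  p.length = n ∧ hsum p = 0 ∧ NonNegPath p

/-- A ballotlike path: stays weakly above the x-axis, umber horizontal steps
never at height zero, denim horizontal steps never before the first down step. -/
def Ballotlike (p : List BStep) : Prop := NonNegPath p ∧ Res1 p ∧ Res2 p

/-- Binomial coefficient for integer arguments; zero for negative/out-of-range arguments. -/
def zchoose (m j : ℤ) : ℤ :=
  if 0 ≤ m ∧ 0 ≤ j then (Nat.choose m.toNat j.toNat : ℤ) else 0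

/-- `eCount n i` : ballotlike paths from (0,0) to (n,i) with no down step. -/
noncomputable def eCount (n i : ℕ) : ℕ :=
  Nat.card {p : List BStep // p.length = n ∧ Ballotlike p ∧ hsum p = (i : ℤ) ∧ BStep.D ∉ p}

/-- `fCount n i` : ballotlike paths from (0,0) to (n,i) with at least one down step. -/
noncomputable def fCount (n i : ℕ) : ℕ :=
  Nat.card {p : List BStep // p.length = n ∧ Ballotlike p ∧ hsum p = (i : ℤ) ∧ BStep.D ∈ p}


/-! Classify a path counted by `f(n+1, i)` by its last step. The restrictions on a step depend
only on the part of the path before it, so the prefix is again ballotlike, of length `n`.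
A last step `U`, `u` or `d` leaves a prefix counted by `f(n, i-1)`, `f(n, i)`, `f(n, i)`
(`U` and `u` are impossible when `i = 0`); a last step `D` leaves a prefix ending at height
`i+1` that may or may not contain a down step, counted by `f(n, i+1) + e(n, i+1)`. -/

section Snoc

variable {α : Type*}

theorem Nat.card_subtype_and_add_card_subtype_and_not (A B : α → Prop) [Finite {x // A x}] :
    Nat.card {x // A x ∧ B x} + Nat.card {x // A x ∧ ¬B x} = Nat.card {x // A x} := by
  classical
  rw [← Nat.card_congr (Equiv.subtypeSubtypeEquivSubtypeInter A B),
    ← Nat.card_congr (Equiv.subtypeSubtypeEquivSubtypeInter A (¬B ·)), ← Nat.card_sum]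
  exact Nat.card_congr (Equiv.sumCompl _)

def subtypeEquivSigmaSnoc (P : List α → Prop) (hP : ¬P []) :
    {p // P p} ≃ Σ a : α, {q // P (q ++ [a])} where
  toFun p :=
    have hp : p.1 ≠ [] := by rintro h; exact hP (h ▸ p.2)
    ⟨p.1.getLast hp, p.1.dropLast, by rw [List.dropLast_concat_getLast]; exact p.2⟩
  invFun x := ⟨x.2.1 ++ [x.1], x.2.2⟩
  left_inv p := Subtype.ext (List.dropLast_concat_getLast _)
  right_inv x := Sigma.subtype_ext (by simp) (by simp)

theorem Nat.card_subtype_eq_sum_snoc [Fintype α] (P : List α → Prop) (hP : ¬P [])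
    [Finite {p // P p}] : Nat.card {p // P p} = ∑ a, Nat.card {q // P (q ++ [a])} := by
  have (a : α) : Finite {q // P (q ++ [a])} :=
    Finite.of_injective (fun q => (⟨q.1 ++ [a], q.2⟩ : {p // P p}))
      fun q r h => Subtype.ext (List.append_left_injective [a] (congrArg Subtype.val h))
  rw [Nat.card_congr (subtypeEquivSigmaSnoc P hP), Nat.card_sigma]

theorem forall_take_append_singleton (R : List α → Prop) (q : List α) (a : α) :
    (∀ k, R ((q ++ [a]).take k)) ↔ (∀ k, R (q.take k)) ∧ R (q ++ [a]) := by
  constructor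
  · intro h
    refine ⟨fun k => ?_, by simpa [List.take_of_length_le] using h (q.length + 1)⟩
    rcases le_or_gt k q.length with hk | hk
    · simpa [List.take_append, Nat.sub_eq_zero_of_le hk] using h k
    · simpa [List.take_of_length_le hk.le] using h q.length
  · rintro ⟨h, ha⟩ k
    rcases le_or_gt k q.length with hk | hk
    · simpa [List.take_append, Nat.sub_eq_zero_of_le hk] using h k
    · rw [List.take_of_length_le (by simpa using hk)]
      exact ha

def StepwiseAfterPrefix (Q : List α → α → Prop) (p : List α) : Prop :=
  ∀ i (hi : i < p.length), Q (p.take i) p[i]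

theorem stepwiseAfterPrefix_append_singleton (Q : List α → α → Prop) (q : List α) (a : α) :
    StepwiseAfterPrefix Q (q ++ [a]) ↔ StepwiseAfterPrefix Q q ∧ Q q a := by
  have hlast : ∀ h : q.length < (q ++ [a]).length,
      Q ((q ++ [a]).take q.length) (q ++ [a])[q.length] ↔ Q q a := by
    simp
  have hinit : ∀ i (hi : i < q.length) (h : i < (q ++ [a]).length),
      Q ((q ++ [a]).take i) (q ++ [a])[i] ↔ Q (q.take i) q[i] := by
    intro i hi h
    rw [List.getElem_append_left hi, List.take_append, Nat.sub_eq_zero_of_le hi.le]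
    simp
  simp only [StepwiseAfterPrefix, List.length_append, List.length_singleton]
  constructor
  · intro h
    exact ⟨fun i hi => (hinit i hi (by simp; omega)).1 (h i (by omega)),
      (hlast (by simp)).1 (h _ (by omega))⟩
  · rintro ⟨h, ha⟩ i hi
    rcases Nat.lt_succ_iff_lt_or_eq.1 hi with hi | rfl
    · exact (hinit i hi (by simp; omega)).2 (h i hi)
    · exact (hlast (by simp)).2 ha

theorem finite_subtype_length_eq_and [Finite α] (n : ℕ) (X : List α → Prop) :
    Finite {p : List α // p.length = n ∧ X p} :=
  ((List.finite_length_eq α n).subset fun _ h => h.1).to_subtype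

end Snoc

instance : Fintype BStep := ⟨{.U, .D, .Hu, .Hd}, by intro x; cases x <;> simp⟩

theorem BStep.sum_univ {M : Type*} [AddCommMonoid M] (f : BStep → M) :
    ∑ s, f s = f .U + f .D + f .Hu + f .Hd := by
  simp [Finset.univ, Fintype.elems, add_assoc]

@[simp]
theorem hsum_append_singleton (q : List BStep) (s : BStep) : hsum (q ++ [s]) = hsum q + s.h := by
  simp [hsum]

theorem nonNegPath_append_singleton (q : List BStep) (s : BStep) :
    NonNegPath (q ++ [s]) ↔ NonNegPath q ∧ 0 ≤ hsum q + s.h :=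
  (forall_take_append_singleton (0 ≤ hsum ·) q s).trans (and_congr_right' (by simp))

theorem NonNegPath.hsum_nonneg {p : List BStep} (h : NonNegPath p) : 0 ≤ hsum p := by
  simpa using h p.length

theorem res1_iff (p : List BStep) :
    Res1 p ↔ StepwiseAfterPrefix (fun q s => s = .Hu → 0 < hsum q) p :=
  Iff.rfl

theorem res2_iff (p : List BStep) :
    Res2 p ↔ StepwiseAfterPrefix (fun q s => s = .Hd → .D ∈ q) p := by
  refine forall₂_congr fun i hi => imp_congr_right fun _ => ?_
  simp only [List.mem_iff_getElem, List.getElem_take, List.length_take]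
  exact ⟨fun ⟨j, hj, hji, h⟩ => ⟨j, by omega, h⟩, fun ⟨j, hj, h⟩ => ⟨j, by omega, by omega, h⟩⟩

theorem ballotlike_append_singleton (q : List BStep) (s : BStep) :
    Ballotlike (q ++ [s]) ↔ Ballotlike q ∧ 0 ≤ hsum q + s.h ∧
      (s = .Hu → 0 < hsum q) ∧ (s = .Hd → .D ∈ q) := by
  simp only [Ballotlike, nonNegPath_append_singleton, res1_iff, res2_iff,
    stepwiseAfterPrefix_append_singleton]
  tauto

-- `fCount n i = Nat.card {p // IsFPath n i p}` holds by `rfl`.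
def IsFPath (n i : ℕ) (p : List BStep) : Prop :=
  p.length = n ∧ Ballotlike p ∧ hsum p = (i : ℤ) ∧ BStep.D ∈ p

theorem isFPath_append_singleton {n i : ℕ} {q : List BStep} {s : BStep} :
    IsFPath (n + 1) i (q ++ [s]) ↔ q.length = n ∧ Ballotlike q ∧ hsum q + s.h = i ∧
      (s = .Hu → 0 < hsum q) ∧ (s = .Hd → .D ∈ q) ∧ (s = .D ∨ .D ∈ q) := by
  simp only [IsFPath, ballotlike_append_singleton, hsum_append_singleton, List.length_append,
    List.length_singleton, List.mem_append, List.mem_singleton, add_left_inj]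
  constructor
  · rintro ⟨hn, ⟨hq, -, hu, hd⟩, hi, hD⟩
    exact ⟨hn, hq, hi, hu, hd, hD.symm.imp_left Eq.symm⟩
  · rintro ⟨hn, hq, hi, hu, hd, hD⟩
    exact ⟨hn, ⟨hq, hi ▸ Int.natCast_nonneg i, hu, hd⟩, hi, hD.symm.imp_right Eq.symm⟩

theorem card_snoc_D (n i : ℕ) :
    Nat.card {q // IsFPath (n + 1) i (q ++ [.D])} = fCount n (i + 1) + eCount n (i + 1) := by
  have := finite_subtype_length_eq_and n fun q => Ballotlike q ∧ hsum q = ((i + 1 : ℕ) : ℤ)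
  calc Nat.card {q // IsFPath (n + 1) i (q ++ [.D])}
      = Nat.card {q // q.length = n ∧ Ballotlike q ∧ hsum q = ((i + 1 : ℕ) : ℤ)} := by
        refine Nat.card_congr (Equiv.subtypeEquivRight fun q => ?_)
        simp only [isFPath_append_singleton, BStep.h, reduceCtorEq, false_imp_iff, true_or,
          and_true, Nat.cast_add, Nat.cast_one]
        exact and_congr_right fun _ => and_congr_right fun _ => by omega
    _ = fCount n (i + 1) + eCount n (i + 1) := by
        rw [← Nat.card_subtype_and_add_card_subtype_and_not _ (BStep.D ∈ ·)]
        simp only [fCount, eCount, and_assoc]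

theorem card_snoc_U_succ (n i : ℕ) :
    Nat.card {q // IsFPath (n + 1) (i + 1) (q ++ [.U])} = fCount n i := by
  refine Nat.card_congr (Equiv.subtypeEquivRight fun q => ?_)
  simp [isFPath_append_singleton, BStep.h]

theorem card_snoc_U_zero (n : ℕ) : Nat.card {q // IsFPath (n + 1) 0 (q ++ [.U])} = 0 := by
  refine Nat.card_eq_zero.2 (.inl ⟨fun ⟨q, hq⟩ => ?_⟩)
  obtain ⟨-, hq, hi, -⟩ := isFPath_append_singleton.1 hq
  have := hq.1.hsum_nonneg
  simp [BStep.h] at hi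
  omega

theorem card_snoc_Hu_succ (n i : ℕ) :
    Nat.card {q // IsFPath (n + 1) (i + 1) (q ++ [.Hu])} = fCount n (i + 1) := by
  refine Nat.card_congr (Equiv.subtypeEquivRight fun q => ?_)
  simp only [isFPath_append_singleton, BStep.h, add_zero, forall_const, reduceCtorEq,
    false_imp_iff, or_iff_right_of_imp, true_and]
  constructor
  · exact fun ⟨hn, hq, hi, _, hD⟩ => ⟨hn, hq, hi, hD⟩
  · exact fun ⟨hn, hq, hi, hD⟩ => ⟨hn, hq, hi, (by omega), hD⟩

theorem card_snoc_Hu_zero (n : ℕ) : Nat.card {q // IsFPath (n + 1) 0 (q ++ [.Hu])} = 0 := by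
  refine Nat.card_eq_zero.2 (.inl ⟨fun ⟨q, hq⟩ => ?_⟩)
  obtain ⟨-, -, hi, hpos, -⟩ := isFPath_append_singleton.1 hq
  simp [BStep.h] at hi
  exact (hpos rfl).ne' hi

theorem card_snoc_Hd (n i : ℕ) :
    Nat.card {q // IsFPath (n + 1) i (q ++ [.Hd])} = fCount n i := by
  refine Nat.card_congr (Equiv.subtypeEquivRight fun q => ?_)
  simp [isFPath_append_singleton, BStep.h]

theorem fCount_succ_eq_sum (n i : ℕ) :
    fCount (n + 1) i = ∑ s, Nat.card {q // IsFPath (n + 1) i (q ++ [s])} := by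
  have := finite_subtype_length_eq_and (n + 1) fun p => Ballotlike p ∧ hsum p = i ∧ BStep.D ∈ p
  exact Nat.card_subtype_eq_sum_snoc _ (by simp)

theorem fCount_succ_succ (n i : ℕ) :
    fCount (n + 1) (i + 1) = fCount n i + 2 * fCount n (i + 1) + fCount n (i + 2)
      + eCount n (i + 2) := by
  rw [fCount_succ_eq_sum, BStep.sum_univ, card_snoc_U_succ, card_snoc_D, card_snoc_Hu_succ,
    card_snoc_Hd]
  ring

theorem fCount_succ_zero (n : ℕ) : fCount (n + 1) 0 = fCount n 0 + fCount n 1 + eCount n 1 := by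
  rw [fCount_succ_eq_sum, BStep.sum_univ, card_snoc_U_zero, card_snoc_D, card_snoc_Hu_zero,
    card_snoc_Hd]
  ring

theorem fCount_recurrences :
    (∀ n i : ℕ, 1 ≤ i → i < n →
      fCount n i = fCount (n - 1) (i - 1) + 2 * fCount (n - 1) i
        + fCount (n - 1) (i + 1) + eCount (n - 1) (i + 1)) ∧
    (∀ n : ℕ, 2 ≤ n →
      fCount n 0 = fCount (n - 1) 0 + fCount (n - 1) 1 + eCount (n - 1) 1) := by
  refine ⟨fun n i hi hin => ?_, fun n hn => ?_⟩
  · obtain ⟨m, rfl⟩ : ∃ m, n = m + 1 := ⟨n - 1, by omega⟩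
    obtain ⟨j, rfl⟩ : ∃ j, i = j + 1 := ⟨i - 1, by omega⟩
    simpa using fCount_succ_succ m j
  · obtain ⟨m, rfl⟩ : ∃ m, n = m + 1 := ⟨n - 1, by omega⟩
    simpa using fCount_succ_zero m
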